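/- arXiv:1710.01759 — 8 statements merged into one kernel-verified Lean document; each statement's English description precedes it below -/
import Mathlib

section
/- For every locally convex space E over ℝ, the map p : E' → Ê defined by p(f) = exp(2πi f) is a group isomorphism between the topological dual space E' (as an additive group) and the group Ê of continuous characters of E. -/
open Real

/-!
A locally convex real space is contractible and locally path-connected, so a continuous character
`χ : E → S¹` lifts through the covering map `t ↦ exp (i t)` to a continuous `F : E → ℝ` with
`F 0 = 0`. For fixed `y`, both `x ↦ F (x + y)` and `x ↦ F x + F y` lift `x ↦ χ (x + y)` and agree
at `0`, so by uniqueness of lifts `F` is additive; being continuous, it is `ℝ`-linear. Uniqueness of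
lifts also gives injectivity of `f ↦ exp (2πi f)`.
-/

theorem Circle.exists_continuous_lift {A : Type*} [TopologicalSpace A] [SimplyConnectedSpace A]
    [LocallyPathConnectedSpace A] {χ : A → Circle} (hχ : Continuous χ) {a₀ : A} (ha₀ : χ a₀ = 1) :
    ∃ F : A → ℝ, Continuous F ∧ F a₀ = 0 ∧ exp ∘ F = χ := by
  obtain ⟨F, ⟨hF₀, hFχ⟩, -⟩ :=
    isCoveringMap_exp.existsUnique_continuousMap_lifts ⟨χ, hχ⟩ a₀ 0 (by simp [ha₀])
  exact ⟨F, F.continuous, hF₀, hFχ⟩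

theorem ContinuousLinearMap.eq_of_circle_exp_eq {E : Type*} [AddCommGroup E] [Module ℝ E]
    [TopologicalSpace E] [ContinuousAdd E] [ContinuousSMul ℝ E] {f g : E →L[ℝ] ℝ}
    (h : ∀ x, Circle.exp (f x) = Circle.exp (g x)) : f = g :=
  DFunLike.coe_injective <|
    Circle.isCoveringMap_exp.eq_of_comp_eq f.continuous g.continuous (funext h) 0 (by simp)

theorem exists_continuousLinearMap_circle_exp_eq {E : Type*} [AddCommGroup E] [Module ℝ E]
    [TopologicalSpace E] [IsTopologicalAddGroup E] [ContinuousSMul ℝ E] [LocallyConvexSpace ℝ E]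
    {χ : E → Circle} (hχ : Continuous χ) (hmul : ∀ x y, χ (x + y) = χ x * χ y) :
    ∃ f : E →L[ℝ] ℝ, ∀ x, Circle.exp (f x) = χ x := by
  have hχ₀ : χ 0 = 1 := by simpa using hmul 0 0
  obtain ⟨F, hF, hF₀, hFχ⟩ := Circle.exists_continuous_lift hχ hχ₀
  have hlift (x : E) : Circle.exp (F x) = χ x := congrFun hFχ x
  have hadd (x y : E) : F (x + y) = F x + F y :=
    congrFun (Circle.isCoveringMap_exp.eq_of_comp_eq (g₁ := fun x ↦ F (x + y))
      (g₂ := fun x ↦ F x + F y) (by fun_prop) (by fun_prop)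
      (funext fun x ↦ by simp only [Function.comp_apply, Circle.exp_add, hlift, hmul])
      0 (by simp [hF₀])) x
  exact ⟨(AddMonoidHom.mk' F hadd).toRealLinearMap hF, hlift⟩

/-- for every real locally convex space `E`, the map `p : E' → Ê`,
`p(f) = exp(2πif)`, is a group isomorphism between the topological dual `E'` (as an
additive group) and the group `Ê` of continuous characters of `E` (pointwise
multiplication). -/
theorem stmt4 {E : Type*} [AddCommGroup E] [Module ℝ E] [TopologicalSpace E]
    [IsTopologicalAddGroup E] [ContinuousSMul ℝ E] [LocallyConvexSpace ℝ E] :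
    ∃ p : (E →L[ℝ] ℝ) →
        {χ : E → Circle // Continuous χ ∧ ∀ x y, χ (x + y) = χ x * χ y},
      (∀ f : E →L[ℝ] ℝ, ∀ x : E,
          ((p f).1 x : ℂ) = Complex.exp (2 * Real.pi * Complex.I * (f x : ℂ))) ∧
      Function.Bijective p ∧
      (∀ f g : E →L[ℝ] ℝ, ∀ x : E, (p (f + g)).1 x = (p f).1 x * (p g).1 x) := by
  have h2π : (2 * π : ℝ) ≠ 0 := by positivity
  refine ⟨fun f ↦ ⟨fun x ↦ Circle.exp ((2 * π) • f x), by fun_prop,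
      fun x y ↦ by simp only [map_add, smul_add, Circle.exp_add]⟩, fun f x ↦ ?_, ⟨?_, ?_⟩,
    fun f g x ↦ by simp only [add_apply, smul_add, Circle.exp_add]⟩
  · simp only [smul_eq_mul, Circle.coe_exp]
    push_cast
    ring_nf
  · intro f g hfg
    exact smul_right_injective _ h2π <| ContinuousLinearMap.eq_of_circle_exp_eq
      (f := (2 * π) • f) (g := (2 * π) • g) fun x ↦ congrFun (congrArg Subtype.val hfg) x
  · rintro ⟨χ, hχ, hmul⟩
    obtain ⟨f, hf⟩ := exists_continuousLinearMap_circle_exp_eq hχ hmul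
    refine ⟨(2 * π)⁻¹ • f, Subtype.ext <| funext fun x ↦ ?_⟩
    show Circle.exp ((2 * π) • ((2 * π)⁻¹ • f) x) = χ x
    rw [smul_apply, smul_smul, mul_inv_cancel₀ h2π, one_smul, hf]
end

section
/- Let 𝒜 be the set of sequences a = (a_n) of positive reals with a_n → ∞, and for a ∈ 𝒜 let S(a) = ⋃_n (-a_n, a_n)·e_n ⊆ ℝ^(ℕ). For any sequence S = (S(a_k))_{k∈ω}, define U(S) = ⋃_k (S(a_0)+⋯+S(a_k)). Then the family 𝒩 of all such sets U(S) satisfies: for every U(S) ∈ 𝒩 there is U(S') ∈ 𝒩 with U(S') + U(S') ⊆ U(S). -/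
open Filter Pointwise

/-- `a ∈ 𝒜`: a sequence of positive reals tending to `∞`. -/
def memA (a : ℕ → ℝ) : Prop := (∀ n, 0 < a n) ∧ Tendsto a atTop atTop

/-- `S(a) = ⋃ n, (-a_n, a_n)·e_n ⊆ ℝ^(ℕ)`. -/
def Sset (a : ℕ → ℝ) : Set (ℕ →₀ ℝ) :=
  ⋃ n : ℕ, {x : ℕ →₀ ℝ | ∃ t : ℝ, |t| < a n ∧ x = Finsupp.single n t}

/-- `U(S) = ⋃ k, (S(a_0) + ⋯ + S(a_k))` (Minkowski sums). -/
def Uset (a : ℕ → ℕ → ℝ) : Set (ℕ →₀ ℝ) :=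
  ⋃ k : ℕ, ∑ j ∈ Finset.range (k + 1), Sset (a j)

/-!
Take `S'_k = S(min (a_{2k}) (a_{2k+1}))`. Since `0 ∈ S(a)`, the partial sums of `U(S')` increase,
so an element of `U(S') + U(S')` lies in `∑_{j ≤ m} (S'_j + S'_j)` for some `m`. This set is
contained in `∑_{j ≤ m} (S(a_{2j}) + S(a_{2j+1}))`, the partial sum of `U(S)` up to `2m + 1`.
-/

theorem sum_range_two_mul_eq_sum_pair {M : Type*} [AddCommMonoid M] (f : ℕ → M) (n : ℕ) :
    ∑ i ∈ Finset.range (2 * n), f i = ∑ j ∈ Finset.range n, (f (2 * j) + f (2 * j + 1)) := by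
  induction n with
  | zero => simp
  | succ n ih => simp [Nat.mul_succ, Finset.sum_range_succ, ih, add_assoc]

theorem memA_min {a b : ℕ → ℝ} (ha : memA a) (hb : memA b) :
    memA fun n => min (a n) (b n) :=
  ⟨fun n => lt_min (ha.1 n) (hb.1 n), tendsto_inf_atTop atTop ha.2 hb.2⟩

theorem zero_mem_Sset {a : ℕ → ℝ} (ha : 0 < a 0) : (0 : ℕ →₀ ℝ) ∈ Sset a :=
  Set.mem_iUnion.2 ⟨0, 0, by simpa using ha, by simp⟩

theorem Sset_mono {a b : ℕ → ℝ} (h : ∀ n, a n ≤ b n) : Sset a ⊆ Sset b := by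
  intro x hx
  obtain ⟨n, t, ht, rfl⟩ := Set.mem_iUnion.1 hx
  exact Set.mem_iUnion.2 ⟨n, t, ht.trans_le (h n), rfl⟩

theorem sum_range_Sset_mono {a : ℕ → ℕ → ℝ} (ha : ∀ j, 0 < a j 0) {m n : ℕ} (hmn : m ≤ n) :
    ∑ j ∈ Finset.range m, Sset (a j) ⊆ ∑ j ∈ Finset.range n, Sset (a j) :=
  Finset.sum_le_sum_of_subset_of_nonneg (Finset.range_subset_range.2 hmn) fun j _ _ =>
    Set.singleton_subset_iff.2 (zero_mem_Sset (ha j))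

theorem exists_mem_sum_range_Sset_of_mem_Uset_add {a : ℕ → ℕ → ℝ} (ha : ∀ j, 0 < a j 0)
    {x : ℕ →₀ ℝ} (hx : x ∈ Uset a + Uset a) :
    ∃ m, x ∈ ∑ j ∈ Finset.range (m + 1), (Sset (a j) + Sset (a j)) := by
  obtain ⟨y, hy, z, hz, rfl⟩ := hx
  obtain ⟨k, hy⟩ := Set.mem_iUnion.1 hy
  obtain ⟨l, hz⟩ := Set.mem_iUnion.1 hz
  refine ⟨max k l, ?_⟩
  rw [Finset.sum_add_distrib]
  exact Set.add_mem_add (sum_range_Sset_mono ha (by omega) hy)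
    (sum_range_Sset_mono ha (by omega) hz)

theorem Sset_min_add_Sset_min_subset (a b : ℕ → ℝ) :
    Sset (fun n => min (a n) (b n)) + Sset (fun n => min (a n) (b n)) ⊆ Sset a + Sset b :=
  Set.add_subset_add (Sset_mono fun _ => min_le_left _ _) (Sset_mono fun _ => min_le_right _ _)

/-- for every `U(S)` in the family `𝒩` there is `U(S')` in `𝒩` with
`U(S') + U(S') ⊆ U(S)`. -/
theorem stmt6 (a : ℕ → ℕ → ℝ) (ha : ∀ k, memA (a k)) :
    ∃ a' : ℕ → ℕ → ℝ, (∀ k, memA (a' k)) ∧ Uset a' + Uset a' ⊆ Uset a := by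
  have ha' : ∀ k, memA fun n => min (a (2 * k) n) (a (2 * k + 1) n) :=
    fun k => memA_min (ha _) (ha _)
  refine ⟨_, ha', fun x hx => ?_⟩
  obtain ⟨m, hx⟩ := exists_mem_sum_range_Sset_of_mem_Uset_add (fun k => (ha' k).1 0) hx
  refine Set.mem_iUnion.2 ⟨2 * m + 1, ?_⟩
  rw [show 2 * m + 1 + 1 = 2 * (m + 1) by ring, sum_range_two_mul_eq_sum_pair]
  exact Finset.sum_le_sum (fun j _ => Sset_min_add_Sset_min_subset _ _) hx
end

section
/- Let ν be the finest locally convex vector topology on ℝ^(ℕ) in which e_n → 0. Then for every ν-neighborhood U of 0, every t ∈ ℕ, and every a > 0, there exists q ∈ ℕ such that every vector v = λ₁ a e_{m₁} + ⋯ + λ_t a e_{m_t} with q < m₁ < ⋯ < m_t and λ₁,…,λ_t ∈ [-1,1] belongs to U. -/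
/-!
A balanced neighbourhood `S` of `0` with `S + ⋯ + S ⊆ U` (`t` summands) eventually contains
`a e_n`, since `e_n → 0`; being balanced, it then contains every `λ a e_n` with `|λ| ≤ 1`, and
`v` is a sum of `t` such vectors.
-/

open Filter Topology

/-- `t` is a locally convex vector topology on `ℝ^(ℕ)` (the finitely supported real
sequences). -/
def IsLCVectorTopology (t : TopologicalSpace (ℕ →₀ ℝ)) : Prop :=
  @IsTopologicalAddGroup (ℕ →₀ ℝ) t _ ∧ @ContinuousSMul ℝ (ℕ →₀ ℝ) _ _ t ∧
    @LocallyConvexSpace ℝ (ℕ →₀ ℝ) _ _ _ _ t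

/-- `ν` is the finest locally convex vector topology on `ℝ^(ℕ)` in which the standard
basis vectors `e_n = single n 1` converge to `0` (this is the topology of the Graev
free locally convex space `L_G(s)`). -/
def IsNuTopology (ν : TopologicalSpace (ℕ →₀ ℝ)) : Prop :=
  IsLCVectorTopology ν ∧
  Tendsto (fun n : ℕ => Finsupp.single n (1 : ℝ)) atTop (@nhds (ℕ →₀ ℝ) ν 0) ∧
  ∀ t : TopologicalSpace (ℕ →₀ ℝ), IsLCVectorTopology t →
    Tendsto (fun n : ℕ => Finsupp.single n (1 : ℝ)) atTop (@nhds (ℕ →₀ ℝ) t 0) → ν ≤ t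

lemma exists_nhds_zero_forall_sum_mem {E : Type*} [AddCommGroup E] [TopologicalSpace E]
    [IsTopologicalAddGroup E] (t : ℕ) {U : Set E} (hU : U ∈ 𝓝 (0 : E)) :
    ∃ V ∈ 𝓝 (0 : E), ∀ f : Fin t → E, (∀ i, f i ∈ V) → ∑ i, f i ∈ U := by
  induction t generalizing U with
  | zero => exact ⟨U, hU, fun f _ => by simpa using mem_of_mem_nhds hU⟩
  | succ n ih =>
    obtain ⟨V, hV, hVV⟩ := exists_nhds_zero_half hU
    obtain ⟨W, hW, hWsum⟩ := ih hV
    refine ⟨V ∩ W, inter_mem hV hW, fun f hf => ?_⟩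
    rw [Fin.sum_univ_succ]
    exact hVV _ (hf 0).1 _ (hWsum (fun i => f i.succ) fun i => (hf i.succ).2)

lemma Filter.Tendsto.eventually_forall_norm_le_one_smul_mem {𝕜 E ι : Type*}
    [NormedDivisionRing 𝕜] [NeBot (𝓝[≠] (0 : 𝕜))] [AddCommGroup E] [Module 𝕜 E]
    [TopologicalSpace E] [ContinuousSMul 𝕜 E] {l : Filter ι} {x : ι → E}
    (hx : Tendsto x l (𝓝 0)) {V : Set E} (hV : V ∈ 𝓝 (0 : E)) :
    ∀ᶠ n in l, ∀ c : 𝕜, ‖c‖ ≤ 1 → c • x n ∈ V :=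
  (hx.eventually_mem (balancedCore_mem_nhds_zero hV)).mono fun _ hn _ hc =>
    balancedCore_subset V ((balancedCore_balanced V).smul_mem hc hn)

theorem stmt10_general (ν : TopologicalSpace (ℕ →₀ ℝ)) (hν : IsNuTopology ν)
    (U : Set (ℕ →₀ ℝ)) (hU : U ∈ @nhds (ℕ →₀ ℝ) ν 0) (t : ℕ) (a : ℝ) :
    ∃ q : ℕ, ∀ m : Fin t → ℕ, ∀ lam : Fin t → ℝ, StrictMono m → (∀ i, q < m i) →
      (∀ i, lam i ∈ Set.Icc (-1 : ℝ) 1) →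
      (∑ i : Fin t, Finsupp.single (m i) (lam i * a)) ∈ U := by
  let _ : TopologicalSpace (ℕ →₀ ℝ) := ν
  obtain ⟨⟨_, _, -⟩, htend, -⟩ := hν
  obtain ⟨V, hV, hVsum⟩ := exists_nhds_zero_forall_sum_mem t hU
  have htend_a : Tendsto (fun n : ℕ => Finsupp.single n a) atTop (𝓝 0) := by
    simpa [Finsupp.smul_single] using htend.const_smul a
  obtain ⟨q, hq⟩ :=
    (htend_a.eventually_forall_norm_le_one_smul_mem (𝕜 := ℝ) hV).exists_forall_of_atTop
  refine ⟨q, fun m lam _ hm hlam => hVsum _ fun i => ?_⟩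
  simpa [Finsupp.smul_single] using hq (m i) (hm i).le (lam i) (abs_le.2 (hlam i))

/-- for every `ν`-neighborhood `U` of `0`, every `t ∈ ℕ` and every `a > 0`,
there is `q ∈ ℕ` such that every vector `v = λ₁ a e_{m₁} + ⋯ + λ_t a e_{m_t}` with
`q < m₁ < ⋯ < m_t` and `λᵢ ∈ [-1, 1]` belongs to `U`. -/
theorem stmt10 (ν : TopologicalSpace (ℕ →₀ ℝ)) (hν : IsNuTopology ν)
    (U : Set (ℕ →₀ ℝ)) (hU : U ∈ @nhds (ℕ →₀ ℝ) ν 0) (t : ℕ) (a : ℝ) (ha : 0 < a) :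
    ∃ q : ℕ, ∀ m : Fin t → ℕ, ∀ lam : Fin t → ℝ, StrictMono m → (∀ i, q < m i) →
      (∀ i, lam i ∈ Set.Icc (-1 : ℝ) 1) →
      (∑ i : Fin t, Finsupp.single (m i) (lam i * a)) ∈ U :=
  stmt10_general ν hν U hU t a
end

section
/- The topological dual of the Graev free locally convex space L_G(s) over the convergent sequence s = {1/n : n ∈ ℕ} ∪ {0} is linearly isomorphic to the space c₀ of real null sequences: a linear functional given by (y_n) ∈ ℝ^ℕ is continuous on L_G(s) if and only if y_n → 0. -/
open Filter Topology

lemma isLCVectorTopology_induced {E : Type*} [AddCommGroup E] [Module ℝ E] [TopologicalSpace E]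
    [IsTopologicalAddGroup E] [ContinuousSMul ℝ E] [LocallyConvexSpace ℝ E]
    (f : (ℕ →₀ ℝ) →ₗ[ℝ] E) : IsLCVectorTopology (TopologicalSpace.induced f ‹_›) :=
  ⟨topologicalAddGroup_induced f, continuousSMul_induced f, LocallyConvexSpace.induced f⟩

/-- The universal property of `L_G(s)`. -/
theorem IsNuTopology.continuous_linearMap_iff {ν : TopologicalSpace (ℕ →₀ ℝ)}
    (hν : IsNuTopology ν) {E : Type*} [AddCommGroup E] [Module ℝ E] [TopologicalSpace E]
    [IsTopologicalAddGroup E] [ContinuousSMul ℝ E] [LocallyConvexSpace ℝ E]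
    (f : (ℕ →₀ ℝ) →ₗ[ℝ] E) :
    Continuous[ν, inferInstance] f ↔
      Tendsto (fun n : ℕ => f (Finsupp.single n 1)) atTop (𝓝 0) := by
  obtain ⟨-, he, hmin⟩ := hν
  refine ⟨fun hf => map_zero f ▸ (hf.tendsto 0).comp he, fun hfe => ?_⟩
  refine continuous_le_dom (hmin _ (isLCVectorTopology_induced f) ?_) continuous_induced_dom
  rwa [nhds_induced, tendsto_comap_iff, map_zero]

/-- the dual of the Graev free locally convex space `L_G(s)` is the space
`c₀` of real null sequences: the linear functional given by `(y_n) ∈ ℝ^ℕ` is continuous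
on `(ℝ^(ℕ), ν)` if and only if `y_n → 0`. -/
theorem stmt13 (ν : TopologicalSpace (ℕ →₀ ℝ)) (hν : IsNuTopology ν) (y : ℕ → ℝ) :
    Continuous[ν, inferInstance] (fun x : ℕ →₀ ℝ => x.sum fun n c => c * y n) ↔
      Tendsto y atTop (nhds 0) := by
  have hpairing : (fun x : ℕ →₀ ℝ => x.sum fun n c => c * y n) =
      Finsupp.linearCombination ℝ y := by
    ext x
    simp only [Finsupp.linearCombination_apply, smul_eq_mul]
  rw [hpairing, hν.continuous_linearMap_iff]
  simp only [Finsupp.linearCombination_single, one_smul]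
end

section
/- The identity map from ℝ^(ℕ) with the box topology to ℝ^(ℕ) with the finest locally convex vector topology ν in which e_n → 0 is continuous, i.e. ν is weaker than the box topology; moreover ν is strictly weaker. -/
open Filter Topology

/-- The box topology on `ℝ^(ℕ)`: a set is open iff around each of its points it contains
a box `{y | ∀ n, |y n - x n| < a n}` with all `a n > 0`. -/
def boxTopology : TopologicalSpace (ℕ →₀ ℝ) :=
  TopologicalSpace.generateFrom
    {U : Set (ℕ →₀ ℝ) | ∀ x ∈ U, ∃ a : ℕ → ℝ, (∀ n, 0 < a n) ∧
      {y : ℕ →₀ ℝ | ∀ n, |y n - x n| < a n} ⊆ U}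

/-!
A convex neighbourhood `D` of `0` in a locally convex vector topology contains the segments
`{s • eₙ | |s| < δₙ}`. A finitely supported `y` with `|yᵢ| < δᵢ / 2^(i+1)` is the convex
combination `∑ 2^-(i+1) • (2^(i+1) yᵢ • eᵢ) + 2^-m • 0` of points of `D`, so the box with radii
`δₙ / 2^(n+1)` lies in `D`: every such topology is coarser than the box topology. It is strictly
coarser for `ν`, because `eₙ → 0` in `ν` while every `eₙ` stays outside the unit box.
-/

def box (x : ℕ →₀ ℝ) (a : ℕ → ℝ) : Set (ℕ →₀ ℝ) :=
  {y | ∀ n, |y n - x n| < a n}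

theorem isOpen_box (x : ℕ →₀ ℝ) (a : ℕ → ℝ) :
    IsOpen[boxTopology] (box x a) := by
  refine TopologicalSpace.isOpen_generateFrom_of_mem fun z hz => ?_
  refine ⟨fun n => a n - |z n - x n|, fun n => sub_pos.mpr (hz n), fun y hy n => ?_⟩
  calc |y n - x n| ≤ |y n - z n| + |z n - x n| := abs_sub_le _ _ _
    _ < a n := by linarith [hy n]

theorem box_mem_nhds (x : ℕ →₀ ℝ) {a : ℕ → ℝ} (ha : ∀ n, 0 < a n) :
    box x a ∈ @nhds _ boxTopology x :=
  @IsOpen.mem_nhds _ boxTopology _ _ (isOpen_box x a) fun n => by simpa using ha n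

theorem not_tendsto_single_one_boxTopology :
    ¬Tendsto (fun n : ℕ => Finsupp.single n (1 : ℝ)) atTop (@nhds _ boxTopology 0) := by
  intro h
  obtain ⟨n, hn⟩ := (h.eventually_mem (box_mem_nhds 0 fun _ => one_pos)).exists
  simpa using hn n

theorem Convex.sum_range_mem_of_two_pow_smul_mem {E : Type*} [AddCommMonoid E] [Module ℝ E]
    {D : Set E} (hD : Convex ℝ D) (h0 : (0 : E) ∈ D) :
    ∀ (m : ℕ) (v : ℕ → E), (∀ i < m, (2 : ℝ) ^ (i + 1) • v i ∈ D) →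
      ∑ i ∈ Finset.range m, v i ∈ D
  | 0, _, _ => by simpa using h0
  | m + 1, v, hv => by
    have hhead : (2 : ℝ) • v 0 ∈ D := by simpa using hv 0 m.succ_pos
    have htail : ∑ i ∈ Finset.range m, (2 : ℝ) • v (i + 1) ∈ D :=
      hD.sum_range_mem_of_two_pow_smul_mem h0 m _ fun i hi => by
        rw [smul_smul, ← pow_succ]
        exact hv (i + 1) (by omega)
    have := hD hhead htail (by norm_num : (0 : ℝ) ≤ 1 / 2) (by norm_num : (0 : ℝ) ≤ 1 / 2)
      (by norm_num)
    rw [Finset.sum_range_succ']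
    convert this using 1
    rw [← Finset.smul_sum, smul_smul, smul_smul]
    norm_num [add_comm]

theorem exists_box_subset_of_convex_mem_nhds [TopologicalSpace (ℕ →₀ ℝ)]
    [ContinuousSMul ℝ (ℕ →₀ ℝ)] {D : Set (ℕ →₀ ℝ)} (hD : Convex ℝ D) (hD0 : D ∈ 𝓝 0) :
    ∃ a : ℕ → ℝ, (∀ n, 0 < a n) ∧ box 0 a ⊆ D := by
  have hsegment : ∀ n, ∃ δ > 0, ∀ ⦃s : ℝ⦄, dist s 0 < δ → s • Finsupp.single n (1 : ℝ) ∈ D := by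
    intro n
    have hcont : Tendsto (fun s : ℝ => s • Finsupp.single n (1 : ℝ)) (𝓝 0) (𝓝 0) := by
      simpa using (tendsto_id (x := 𝓝 (0 : ℝ))).smul_const (Finsupp.single n (1 : ℝ))
    exact Metric.eventually_nhds_iff.mp (hcont hD0)
  choose δ hδ hδD using hsegment
  refine ⟨fun n => δ n / 2 ^ (n + 1), fun n => by have := hδ n; positivity, fun y hy => ?_⟩
  obtain ⟨m, hm⟩ := Finset.exists_nat_subset_range y.support
  have hy_sum : ∑ i ∈ Finset.range m, Finsupp.single i (y i) = y := by
    rw [← Finsupp.sum_of_support_subset y hm _ fun i _ => Finsupp.single_zero i,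
      Finsupp.sum_single]
  rw [← hy_sum]
  refine hD.sum_range_mem_of_two_pow_smul_mem (mem_of_mem_nhds hD0) m _ fun i _ => ?_
  rw [Finsupp.smul_single, ← Finsupp.smul_single_one]
  refine hδD i ?_
  have hyi : |y i| < δ i / 2 ^ (i + 1) := by simpa [box] using hy i
  rw [Real.dist_0_eq_abs, smul_eq_mul, abs_mul, abs_of_pos (by positivity)]
  rwa [lt_div_iff₀ (by positivity), mul_comm] at hyi

theorem boxTopology_le [t : TopologicalSpace (ℕ →₀ ℝ)] [ContinuousAdd (ℕ →₀ ℝ)]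
    [ContinuousSMul ℝ (ℕ →₀ ℝ)] [LocallyConvexSpace ℝ (ℕ →₀ ℝ)] : boxTopology ≤ t := by
  refine (le_iff_nhds _ _).mpr fun x U hU => ?_
  have hU0 : (x + ·) ⁻¹' U ∈ 𝓝 (0 : ℕ →₀ ℝ) :=
    (continuous_const_add x).continuousAt.preimage_mem_nhds (by simpa using hU)
  obtain ⟨D, ⟨hD0, hD⟩, hDU⟩ := (LocallyConvexSpace.convex_basis_zero ℝ _).mem_iff.mp hU0
  obtain ⟨a, ha, haD⟩ := exists_box_subset_of_convex_mem_nhds hD hD0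
  refine mem_of_superset (box_mem_nhds x ha) fun z hz => ?_
  have hzx : z - x ∈ box 0 a := by simpa [box] using hz
  simpa using hDU (haD hzx)

/-- the identity map from `(ℝ^(ℕ), box)` to `(ℝ^(ℕ), ν)` is continuous,
i.e. `ν` is weaker than the box topology; moreover `ν` is strictly weaker. -/
theorem stmt14 (ν : TopologicalSpace (ℕ →₀ ℝ)) (hν : IsNuTopology ν) :
    Continuous[boxTopology, ν] (id : (ℕ →₀ ℝ) → (ℕ →₀ ℝ)) ∧ ν ≠ boxTopology := by
  obtain ⟨⟨_, _, _⟩, htendsto, -⟩ := hν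
  refine ⟨continuous_id_iff_le.mpr boxTopology_le, fun heq => ?_⟩
  exact not_tendsto_single_one_boxTopology (heq ▸ htendsto)
end

section
/- Let h : ℝ → H be a continuous homomorphism into a topological abelian group H, and give ℝ^(ℕ) the topology 𝒯_H induced by the embedding (x_k) ↦ ((x_k), (h(x_k))) into L_G(s) × 𝔉₀(H). Then 𝒯_H is weaker than the box topology on ℝ^(ℕ); in particular the map (x_k) ↦ (h(x_k)) from (ℝ^(ℕ), box topology) to 𝔉₀(H) is continuous. -/
open Filter Topology

/-- The uniform topology on the group `H^ℕ` of `H`-valued sequences: a set is open iff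
around each of its points it contains a set `x + {y | ∀ n, y n ∈ V}` for some
neighborhood `V` of `0` in `H`.  (Its restriction to `c₀(H)` is the topology of
`𝔉₀(H)`.) -/
def uniformSeqTopology (H : Type*) [AddGroup H] [TopologicalSpace H] :
    TopologicalSpace (ℕ → H) :=
  TopologicalSpace.generateFrom
    {U : Set (ℕ → H) | ∀ x ∈ U, ∃ V ∈ nhds (0 : H), {y : ℕ → H | ∀ n, y n - x n ∈ V} ⊆ U}

/-! A box `{y | ∀ n, |yₙ| < aₙ}` lies in every convex neighbourhood `W` of `0` for a locally
convex vector topology: if `(-εₙ, εₙ) • eₙ ⊆ W` and `aₙ = εₙ / 2^(n+1)`, each `y` in the box is a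
combination of points of `W` and `0` with weights `1/2^(n+1)`. Hence the box topology is finer
than `ν`. The coordinatewise map `x ↦ (h xₖ)ₖ` is box-to-uniformly continuous because a single
neighbourhood of `0` in `ℝ` can be used on all coordinates at once. -/

lemma Convex.sum_smul_mem_of_sum_le_one {E ι : Type*} [AddCommGroup E] [Module ℝ E]
    {s : Set E} (hs : Convex ℝ s) (h₀ : (0 : E) ∈ s) {t : Finset ι} {w : ι → ℝ} {p : ι → E}
    (hw₀ : ∀ i ∈ t, 0 ≤ w i) (hw₁ : ∑ i ∈ t, w i ≤ 1) (hp : ∀ i ∈ t, p i ∈ s) :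
    ∑ i ∈ t, w i • p i ∈ s := by
  set W := ∑ i ∈ t, w i
  rcases (Finset.sum_nonneg hw₀).eq_or_lt with hW | hW
  · have hw : ∀ i ∈ t, w i = 0 := (Finset.sum_eq_zero_iff_of_nonneg hw₀).mp hW.symm
    rwa [Finset.sum_eq_zero fun i hi => by simp [hw i hi]]
  · have hnormalized : ∑ i ∈ t, (w i / W) • p i ∈ s :=
      hs.sum_mem (fun i hi => div_nonneg (hw₀ i hi) hW.le)
        (by rw [← Finset.sum_div, div_self hW.ne']) hp
    convert hs.smul_mem_of_zero_mem h₀ hnormalized ⟨hW.le, hw₁⟩ using 1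
    rw [Finset.smul_sum]
    refine Finset.sum_congr rfl fun i _ => ?_
    rw [smul_smul, mul_div_cancel₀ _ hW.ne']

lemma Convex.exists_box_subset {W : Set (ℕ →₀ ℝ)} (hW : Convex ℝ W) (h₀ : (0 : ℕ →₀ ℝ) ∈ W)
    (haxis : ∀ n, ∃ ε > 0, ∀ c : ℝ, |c| < ε → Finsupp.single n c ∈ W) :
    ∃ a : ℕ → ℝ, (∀ n, 0 < a n) ∧ {y : ℕ →₀ ℝ | ∀ n, |y n| < a n} ⊆ W := by
  choose ε hε hεW using haxis
  set w : ℕ → ℝ := fun n => 1 / 2 / 2 ^ n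
  have hw : ∀ n, 0 < w n := fun n => by positivity
  refine ⟨fun n => w n * ε n, fun n => mul_pos (hw n) (hε n), fun y hy => ?_⟩
  have hy_sum : y = ∑ n ∈ y.support, w n • Finsupp.single n (y n / w n) := by
    conv_lhs => rw [← y.sum_single]
    refine Finset.sum_congr rfl fun n _ => ?_
    rw [Finsupp.smul_single, smul_eq_mul, mul_div_cancel₀ _ (hw n).ne']
  rw [hy_sum]
  refine hW.sum_smul_mem_of_sum_le_one h₀ (fun n _ => (hw n).le) ?_ fun n _ => hεW n _ ?_
  · calc ∑ n ∈ y.support, w n ≤ ∑' n, w n :=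
          (summable_geometric_two' 1).sum_le_tsum _ fun n _ => (hw n).le
      _ = 1 := tsum_geometric_two' 1
  · rw [abs_div, abs_of_pos (hw n), div_lt_iff₀ (hw n), mul_comm]
    exact hy n

lemma isOpen_boxTopology {U : Set (ℕ →₀ ℝ)}
    (hU : ∀ x ∈ U, ∃ a : ℕ → ℝ, (∀ n, 0 < a n) ∧ {y : ℕ →₀ ℝ | ∀ n, |y n - x n| < a n} ⊆ U) :
    IsOpen[boxTopology] U :=
  TopologicalSpace.GenerateOpen.basic _ hU

lemma boxTopology_le_of_isLCVectorTopology {t : TopologicalSpace (ℕ →₀ ℝ)}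
    (ht : IsLCVectorTopology t) : boxTopology ≤ t := by
  let _ := t
  obtain ⟨_, _, _⟩ := ht
  intro U hU
  refine isOpen_boxTopology fun x hx => ?_
  have hUx : (x + ·) ⁻¹' U ∈ 𝓝 (0 : ℕ →₀ ℝ) :=
    (continuous_const_add x).tendsto' 0 x (add_zero x) (hU.mem_nhds hx)
  obtain ⟨W, ⟨hW, hWconv⟩, hWU⟩ :=
    (LocallyConvexSpace.convex_basis (𝕜 := ℝ) (0 : ℕ →₀ ℝ)).mem_iff.mp hUx
  have haxis : ∀ n, ∃ ε > 0, ∀ c : ℝ, |c| < ε → Finsupp.single n c ∈ W := fun n => by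
    have hsingle : Continuous fun c : ℝ => (Finsupp.single n c : ℕ →₀ ℝ) :=
      (continuous_id.smul continuous_const).congr (Finsupp.smul_single_one n)
    obtain ⟨ε, hε, hball⟩ :=
      Metric.mem_nhds_iff.mp (hsingle.tendsto' 0 0 (Finsupp.single_zero n) hW)
    exact ⟨ε, hε, fun c hc => hball (by simpa [Real.dist_eq] using hc)⟩
  obtain ⟨a, ha, hbox⟩ := hWconv.exists_box_subset (mem_of_mem_nhds hW) haxis
  refine ⟨a, ha, fun y hy => ?_⟩
  simpa using hWU (hbox (a := y - x) hy)

lemma continuous_boxTopology_uniformSeqTopology_comp {H : Type*} [AddCommGroup H]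
    [TopologicalSpace H] (h : ℝ →+ H) (hh : Continuous h) :
    Continuous[boxTopology, uniformSeqTopology H] fun x : ℕ →₀ ℝ => fun k => h (x k) := by
  rw [uniformSeqTopology, continuous_generateFrom_iff]
  intro U hU
  refine isOpen_boxTopology fun x hx => ?_
  obtain ⟨V, hV, hVU⟩ := hU _ hx
  have : h ⁻¹' V ∈ 𝓝 (0 : ℝ) := hh.tendsto' 0 0 h.map_zero hV
  obtain ⟨ε, hε, hball⟩ := Metric.mem_nhds_iff.mp this
  refine ⟨fun _ => ε, fun _ => hε, fun y hy => hVU fun n => ?_⟩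
  rw [← map_sub]
  exact hball (by simpa [Real.dist_eq] using hy n)

theorem stmt15_general {H : Type*} [AddCommGroup H] [TopologicalSpace H]
    (ν : TopologicalSpace (ℕ →₀ ℝ)) (hν : IsNuTopology ν)
    (h : ℝ →+ H) (hh : Continuous h) :
    Continuous[boxTopology,
        TopologicalSpace.induced
          (fun x : ℕ →₀ ℝ => ((x, fun k => h (x k)) : (ℕ →₀ ℝ) × (ℕ → H)))
          (@instTopologicalSpaceProd (ℕ →₀ ℝ) (ℕ → H) ν (uniformSeqTopology H))]
      (id : (ℕ →₀ ℝ) → (ℕ →₀ ℝ)) ∧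
    Continuous[boxTopology, uniformSeqTopology H]
      (fun x : ℕ →₀ ℝ => fun k : ℕ => h (x k)) := by
  have hcoord := continuous_boxTopology_uniformSeqTopology_comp h hh
  have hid : Continuous[boxTopology, ν] id :=
    continuous_id_iff_le.mpr (boxTopology_le_of_isLCVectorTopology hν.1)
  refine ⟨?_, hcoord⟩
  rw [continuous_induced_rng]
  exact @Continuous.prodMk _ _ _ ν (uniformSeqTopology H) boxTopology _ _ hid hcoord

/-- for a continuous homomorphism `h : ℝ → H` into a topological abelian
group `H`, the topology `𝒯_H` on `ℝ^(ℕ)` induced by the embedding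
`(x_k) ↦ ((x_k), (h(x_k)))` into `L_G(s) × 𝔉₀(H)` is weaker than the box topology; in
particular `(x_k) ↦ (h(x_k))` is continuous from `(ℝ^(ℕ), box)` to `𝔉₀(H)`. -/
theorem stmt15 {H : Type*} [AddCommGroup H] [TopologicalSpace H] [IsTopologicalAddGroup H]
    (ν : TopologicalSpace (ℕ →₀ ℝ)) (hν : IsNuTopology ν)
    (h : ℝ →+ H) (hh : Continuous h) :
    Continuous[boxTopology,
        TopologicalSpace.induced
          (fun x : ℕ →₀ ℝ => ((x, fun k => h (x k)) : (ℕ →₀ ℝ) × (ℕ → H)))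
          (@instTopologicalSpaceProd (ℕ →₀ ℝ) (ℕ → H) ν (uniformSeqTopology H))]
      (id : (ℕ →₀ ℝ) → (ℕ →₀ ℝ)) ∧
    Continuous[boxTopology, uniformSeqTopology H]
      (fun x : ℕ →₀ ℝ => fun k : ℕ => h (x k)) :=
  stmt15_general ν hν h hh
end

section
/- Let 𝒯 be the topology on ℝ^(ℕ) induced by the embedding (x_k) ↦ ((x_k),(x_k)) into L_G(s) × c₀ (where the second factor carries the sup-norm topology of the Banach space c₀). Then every 𝒯-continuous character χ of (ℝ^(ℕ), 𝒯) is of the form χ((x_n)) = exp(2πi Σ_n x_n y_n) for some real sequence (y_n) with y_n → 0; i.e., 𝒯 and the topology of L_G(s) have the same continuous characters. -/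
/-!
On each coordinate line a `𝒯`-continuous character is a continuous character of `ℝ`, hence
`t ↦ exp (i a_n t)` (lift it through the covering `Circle.exp`; additivity of the lift follows
from uniqueness of lifts), so `χ = exp (i ⟨a, ·⟩)`.

If `a` does not tend to `0`, pick `|a (φ k)| ≥ δ` and let `x_m` be the average of the `m`
vectors `e_{φ k} / a (φ k)`, `m ≤ k < 2m`. Then `⟨a, x_m⟩ = 1` and `‖x_m‖_∞ ≤ 1 / (m δ)`, while
`x_m → 0` in `L_G(s)`, since in a locally convex space averages over ever later windows of
bounded multiples of a null sequence tend to `0`. So `x_m → 0` in `𝒯` but `χ x_m = exp i ≠ 1`.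
-/

open Filter Topology

theorem Circle.exists_eq_exp_mul_of_continuous {f : ℝ → Circle}
    (hadd : ∀ s t, f (s + t) = f s * f t) (hf : Continuous f) :
    ∃ a : ℝ, ∀ t, f t = Circle.exp (t * a) := by
  have hlift := fun (s : ℝ) (e : ℝ) (he : Circle.exp e = f s) =>
    Circle.isCoveringMap_exp.existsUnique_continuousMap_lifts
      ⟨fun t => f (s + t), by fun_prop⟩ 0 e (by simpa using he)
  have hf0 : f 0 = 1 := by simpa using hadd 0 0
  obtain ⟨F, ⟨hF0, hFf⟩, -⟩ := hlift 0 0 (by simp [hf0])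
  have hFexp : ∀ t, Circle.exp (F t) = f t := fun t => by simpa using congrFun hFf t
  -- `F (s + ·)` and `F s + F ·` both lift `f (s + ·)` through `Circle.exp`, starting at `F s`
  have hFadd : ∀ s t, F (s + t) = F s + F t := fun s t =>
    congrFun (congrArg DFunLike.coe ((hlift s (F s) (hFexp s)).unique
      (y₁ := ⟨fun t => F (s + t), by fun_prop⟩) (y₂ := ⟨fun t => F s + F t, by fun_prop⟩)
      ⟨by simp, funext fun t => by simp [hFexp]⟩
      ⟨by simp [hF0], funext fun t => by simp [Circle.exp_add, hFexp, hadd]⟩)) t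
  refine ⟨F 1, fun t => ?_⟩
  have hlin := map_real_smul (AddMonoidHom.mk' F hFadd) F.continuous t 1
  simp only [AddMonoidHom.mk'_apply, smul_eq_mul, mul_one] at hlin
  rw [← hFexp, hlin]

theorem Finsupp.exists_eq_circleExp_linearCombination {ι : Type*} {χ : (ι →₀ ℝ) → Circle}
    (hχ : ∀ x y, χ (x + y) = χ x * χ y) (hline : ∀ i, Continuous fun t : ℝ => χ (single i t)) :
    ∃ a : ι → ℝ, ∀ x, χ x = Circle.exp (linearCombination ℝ a x) := by
  choose a ha using fun i => Circle.exists_eq_exp_mul_of_continuous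
    (fun s t => by simp only [single_add, hχ]) (hline i)
  refine ⟨a, fun x => ?_⟩
  induction x using Finsupp.induction_linear with
  | zero => simpa using hχ 0 0
  | add x y hx hy => rw [hχ, hx, hy, map_add, Circle.exp_add]
  | single i t => rw [ha, linearCombination_single, smul_eq_mul]

theorem tendsto_inv_smul_sum_range_smul {E : Type*} [AddCommGroup E] [Module ℝ E]
    [TopologicalSpace E] [LocallyConvexSpace ℝ E] [ContinuousSMul ℝ E] {u : ℕ → E}
    (hu : Tendsto u atTop (𝓝 0)) {c : ℕ → ℕ → ℝ} (hc : ∀ m k, |c m k| ≤ 1) :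
    Tendsto (fun m : ℕ => (m : ℝ)⁻¹ • ∑ k ∈ Finset.range m, c m k • u (m + k)) atTop (𝓝 0) := by
  rw [(nhds_hasBasis_absConvex ℝ E).tendsto_right_iff]
  rintro U ⟨hU, hUbal, hUconv⟩
  obtain ⟨N, hN⟩ := eventually_atTop.1 (hu hU)
  filter_upwards [eventually_ge_atTop (max N 1)] with m hm
  have hm0 : (m : ℝ) ≠ 0 := by norm_cast; omega
  rw [Finset.smul_sum]
  refine hUconv.sum_mem (fun _ _ => by positivity) (by simp [hm0]) fun k _ => ?_
  exact hUbal.smul_mem (by simpa using hc m k) (hN _ (by omega))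

theorem Finsupp.abs_sum_single_apply_le {ι α : Type*} {s : Finset ι} {g : ι → α}
    (hg : Set.InjOn g s) {c : ι → ℝ} {B : ℝ} (hB : 0 ≤ B) (hc : ∀ k ∈ s, |c k| ≤ B) (n : α) :
    |(∑ k ∈ s, single (g k) (c k)) n| ≤ B := by
  classical
  rw [finsetSum_apply]
  by_cases h : ∃ k ∈ s, g k = n
  · obtain ⟨k, hk, rfl⟩ := h
    rw [Finset.sum_eq_single_of_mem k hk fun j hj hjk =>
      single_eq_of_ne (fun h => hjk (hg hj hk h.symm))]
    simpa using hc k hk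
  · push Not at h
    rw [Finset.sum_eq_zero fun k hk => single_eq_of_ne (h k hk).symm, abs_zero]
    exact hB

open Finsupp in
noncomputable def windowVector (a : ℕ → ℝ) (φ : ℕ → ℕ) (m : ℕ) : ℕ →₀ ℝ :=
  (m : ℝ)⁻¹ • ∑ k ∈ Finset.range m, single (φ (m + k)) (a (φ (m + k)))⁻¹

section windowVector

variable {a : ℕ → ℝ} {φ : ℕ → ℕ} {δ : ℝ}

theorem linearCombination_windowVector (ha : ∀ k, a (φ k) ≠ 0) {m : ℕ} (hm : m ≠ 0) :
    Finsupp.linearCombination ℝ a (windowVector a φ m) = 1 := by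
  simp [windowVector, ha, hm]

theorem abs_windowVector_apply_le (hφ : StrictMono φ) (hδ : 0 < δ) (ha : ∀ k, δ ≤ |a (φ k)|)
    (m n : ℕ) : |windowVector a φ m n| ≤ (m : ℝ)⁻¹ * δ⁻¹ := by
  rw [windowVector, Finsupp.smul_apply, smul_eq_mul, abs_mul, abs_inv, Nat.abs_cast]
  gcongr
  refine Finsupp.abs_sum_single_apply_le (fun k _ l _ h => by simpa using hφ.injective h)
    (by positivity) (fun k _ => ?_) n
  rw [abs_inv]
  exact inv_anti₀ hδ (ha _)

theorem tendstoUniformly_windowVector (hφ : StrictMono φ) (hδ : 0 < δ)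
    (ha : ∀ k, δ ≤ |a (φ k)|) :
    TendstoUniformly (fun m => ⇑(windowVector a φ m)) 0 atTop := by
  rw [Metric.tendstoUniformly_iff]
  intro ε hε
  have hlim : Tendsto (fun m : ℕ => (m : ℝ)⁻¹ * δ⁻¹) atTop (𝓝 0) := by
    simpa using tendsto_inv_atTop_nhds_zero_nat.mul_const δ⁻¹
  filter_upwards [hlim.eventually (gt_mem_nhds hε)] with m hm n
  rw [Pi.zero_apply, dist_zero_left, Real.norm_eq_abs]
  exact (abs_windowVector_apply_le hφ hδ ha m n).trans_lt hm

theorem tendsto_windowVector [TopologicalSpace (ℕ →₀ ℝ)] [LocallyConvexSpace ℝ (ℕ →₀ ℝ)]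
    [ContinuousSMul ℝ (ℕ →₀ ℝ)]
    (he : Tendsto (fun n : ℕ => Finsupp.single n (1 : ℝ)) atTop (𝓝 0))
    (hφ : StrictMono φ) (hδ : 0 < δ) (ha : ∀ k, δ ≤ |a (φ k)|) :
    Tendsto (windowVector a φ) atTop (𝓝 0) := by
  have hu : Tendsto (fun k => δ⁻¹ • Finsupp.single (φ k) (1 : ℝ)) atTop (𝓝 0) := by
    simpa using (he.comp hφ.tendsto_atTop).const_smul δ⁻¹
  have hc : ∀ m k, |δ / a (φ (m + k))| ≤ 1 := fun m k => by
    rw [abs_div, abs_of_pos hδ]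
    exact div_le_one_of_le₀ (ha _) (abs_nonneg _)
  refine (tendsto_inv_smul_sum_range_smul hu hc).congr fun m => ?_
  refine congrArg _ (Finset.sum_congr rfl fun k _ => ?_)
  have : a (φ (m + k)) ≠ 0 := abs_pos.1 (hδ.trans_le (ha _))
  rw [smul_smul, Finsupp.smul_single, smul_eq_mul, mul_one]
  field_simp

end windowVector

theorem induced_id_prodMk_eq_inf {α β : Type*} (t : TopologicalSpace α) [TopologicalSpace β]
    (g : α → β) :
    TopologicalSpace.induced (fun x => (x, g x)) (@instTopologicalSpaceProd α β t inferInstance) =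
      t ⊓ TopologicalSpace.induced g inferInstance := by
  rw [instTopologicalSpaceProd, induced_inf, induced_compose, induced_compose]
  exact congrArg (· ⊓ _) induced_id

theorem continuous_uniformFunOfFun_single (n : ℕ) :
    Continuous fun t : ℝ => UniformFun.ofFun ⇑(Finsupp.single n t) := by
  refine continuous_iff_continuousAt.2 fun t₀ => ?_
  rw [ContinuousAt, UniformFun.tendsto_iff_tendstoUniformly, Metric.tendstoUniformly_iff]
  intro ε hε
  filter_upwards [Metric.ball_mem_nhds t₀ hε] with t ht m
  rcases eq_or_ne n m with rfl | hnm
  · simpa [dist_comm] using ht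
  · simpa [Finsupp.single_apply, hnm] using hε

abbrev Finsupp.supNormTopology : TopologicalSpace (ℕ →₀ ℝ) :=
  TopologicalSpace.induced (fun x => UniformFun.ofFun ⇑x) inferInstance

theorem continuous_single_inf_supNormTopology (t : TopologicalSpace (ℕ →₀ ℝ))
    [@ContinuousSMul ℝ (ℕ →₀ ℝ) _ _ t] (n : ℕ) :
    @Continuous ℝ (ℕ →₀ ℝ) _ (t ⊓ Finsupp.supNormTopology) fun s => Finsupp.single n s := by
  refine continuous_inf_rng.2 ⟨?_, continuous_induced_rng.2 (continuous_uniformFunOfFun_single n)⟩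
  have hsingle : (fun s : ℝ => Finsupp.single n s) = fun s => s • Finsupp.single n (1 : ℝ) := by
    simp
  rw [hsingle]
  exact continuous_id.smul continuous_const

theorem tendsto_zero_of_continuous_circleExp_linearCombination (t : TopologicalSpace (ℕ →₀ ℝ))
    [@LocallyConvexSpace ℝ (ℕ →₀ ℝ) _ _ _ _ t] [@ContinuousSMul ℝ (ℕ →₀ ℝ) _ _ t]
    (he : Tendsto (fun n : ℕ => Finsupp.single n (1 : ℝ)) atTop (𝓝 0)) {a : ℕ → ℝ}
    (hcont : Continuous[t ⊓ Finsupp.supNormTopology, _]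
      fun x => Circle.exp (Finsupp.linearCombination ℝ a x)) :
    Tendsto a atTop (𝓝 0) := by
  by_contra hna
  obtain ⟨δ, hδ, hfreq⟩ : ∃ δ > 0, ∃ᶠ n in atTop, δ ≤ |a n| := by
    rw [Metric.tendsto_atTop] at hna
    push Not at hna
    obtain ⟨δ, hδ, h⟩ := hna
    exact ⟨δ, hδ, frequently_atTop.2 fun N => by simpa [Real.dist_eq] using h N⟩
  obtain ⟨φ, hφ, hφa⟩ := extraction_of_frequently_atTop hfreq
  have hx : Tendsto (windowVector a φ) atTop (@nhds _ (t ⊓ Finsupp.supNormTopology) 0) := by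
    rw [nhds_inf, Finsupp.supNormTopology, nhds_induced]
    refine tendsto_inf.2 ⟨tendsto_windowVector he hφ hδ hφa, tendsto_comap_iff.2 ?_⟩
    exact UniformFun.tendsto_iff_tendstoUniformly.2 (tendstoUniformly_windowVector hφ hδ hφa)
  have hlim := (@Continuous.tendsto _ _ (t ⊓ Finsupp.supNormTopology) _ _ hcont 0).comp hx
  have hone : ∀ᶠ m in atTop, Circle.exp (Finsupp.linearCombination ℝ a (windowVector a φ m)) =
      Circle.exp 1 := by
    filter_upwards [eventually_ne_atTop 0] with m hm
    rw [linearCombination_windowVector (fun k => abs_pos.1 (hδ.trans_le (hφa k))) hm]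
  have h1 : Circle.exp 1 = Circle.exp 0 := by
    simpa using tendsto_nhds_unique tendsto_const_nhds ((tendsto_congr' hone).1 hlim)
  have h2π : (1 : ℝ) < 2 * Real.pi := by linarith [Real.pi_gt_three]
  exact one_ne_zero (Circle.exp_injOn_Ico (a := 0) (b := 2 * Real.pi) (by simp)
    ⟨zero_le_one, h2π⟩ ⟨le_rfl, by positivity⟩ h1)

/-- let `𝒯` be the topology on `ℝ^(ℕ)` induced by the embedding
`(x_k) ↦ ((x_k), (x_k))` into `L_G(s) × c₀` (the second factor carrying the sup-norm =
uniform-convergence topology).  Then every `𝒯`-continuous character of `(ℝ^(ℕ), 𝒯)` has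
the form `χ((x_n)) = exp(2πi Σ_n x_n y_n)` for some null sequence `(y_n)`; i.e. `𝒯` and
`ν` have the same continuous characters. -/
theorem stmt16 (ν : TopologicalSpace (ℕ →₀ ℝ)) (hν : IsNuTopology ν)
    (χ : (ℕ →₀ ℝ) → Circle) (hhom : ∀ x y : ℕ →₀ ℝ, χ (x + y) = χ x * χ y)
    (hcont : Continuous[
        TopologicalSpace.induced
          (fun x : ℕ →₀ ℝ => ((x, UniformFun.ofFun ⇑x) : (ℕ →₀ ℝ) × UniformFun ℕ ℝ))
          (@instTopologicalSpaceProd (ℕ →₀ ℝ) (UniformFun ℕ ℝ) ν inferInstance),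
        inferInstance] χ) :
    ∃ y : ℕ → ℝ, Tendsto y atTop (nhds 0) ∧
      ∀ x : ℕ →₀ ℝ,
        (χ x : ℂ) = Complex.exp (2 * Real.pi * Complex.I * (x.sum fun n c => c * y n)) := by
  obtain ⟨⟨-, hsmul, hlcs⟩, he, -⟩ := hν
  rw [induced_id_prodMk_eq_inf] at hcont
  obtain ⟨a, ha⟩ := Finsupp.exists_eq_circleExp_linearCombination hhom fun n =>
    @Continuous.comp ℝ _ Circle _ (ν ⊓ Finsupp.supNormTopology) _ _ _ hcont
      (continuous_single_inf_supNormTopology ν n)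
  rw [show χ = _ from funext ha] at hcont
  refine ⟨fun n => a n / (2 * Real.pi), ?_, fun x => ?_⟩
  · simpa using (tendsto_zero_of_continuous_circleExp_linearCombination ν he hcont).div_const
      (2 * Real.pi)
  · rw [ha, Circle.coe_exp, Finsupp.linearCombination_apply]
    congr 1
    simp only [Finsupp.sum, smul_eq_mul, Complex.ofReal_sum, Complex.ofReal_mul,
      Complex.ofReal_div, Complex.ofReal_ofNat, Finset.mul_sum, Finset.sum_mul]
    refine Finset.sum_congr rfl fun n _ => ?_
    field_simp
end

section
/- If X is a Tychonoff space, then the free locally convex space L(X) is topologically isomorphic to ℝ ⊕ L_G(X), the direct sum of the reals and the Graev free locally convex space over X; consequently L(X) is a Mackey space if and only if L_G(X) is a Mackey space. -/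
open Topology

universe u v

/-- `(L, i)` is the free locally convex space over the Tychonoff space `X`: `i : X → L`
is continuous and every continuous map from `X` to a locally convex space `E` extends
uniquely to a continuous linear operator `L → E`. -/
def IsFreeLCS (X : Type v) [TopologicalSpace X] (L : Type u) [AddCommGroup L]
    [Module ℝ L] [TopologicalSpace L] (i : X → L) : Prop :=
  Continuous i ∧
  ∀ (E : Type u) [AddCommGroup E] [Module ℝ E] [TopologicalSpace E]
    [IsTopologicalAddGroup E] [ContinuousSMul ℝ E] [LocallyConvexSpace ℝ E]
    (f : X → E), Continuous f → ∃! g : L →L[ℝ] E, ∀ x : X, g (i x) = f x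

/-- `(L, i)` is the Graev free locally convex space over `X` with distinguished point
`e`: as `IsFreeLCS`, but `i e = 0` and the extension property holds for continuous maps
sending `e` to `0`. -/
def IsGraevFreeLCS (X : Type v) [TopologicalSpace X] (e : X) (L : Type u)
    [AddCommGroup L] [Module ℝ L] [TopologicalSpace L] (i : X → L) : Prop :=
  Continuous i ∧ i e = 0 ∧
  ∀ (E : Type u) [AddCommGroup E] [Module ℝ E] [TopologicalSpace E]
    [IsTopologicalAddGroup E] [ContinuousSMul ℝ E] [LocallyConvexSpace ℝ E]
    (f : X → E), Continuous f → f e = 0 → ∃! g : L →L[ℝ] E, ∀ x : X, g (i x) = f x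

/-- A locally convex space is Mackey if every locally convex vector topology on it with
the same continuous linear functionals is coarser than its topology. -/
def IsMackeySpace (E : Type u) [AddCommGroup E] [Module ℝ E] [τ : TopologicalSpace E] :
    Prop :=
  ∀ t : TopologicalSpace E, @IsTopologicalAddGroup E t _ → @ContinuousSMul ℝ E _ _ t →
    @LocallyConvexSpace ℝ E _ _ _ _ t →
    (∀ f : E →ₗ[ℝ] ℝ, Continuous[t, inferInstance] f ↔ Continuous[τ, inferInstance] f) →
    τ ≤ t

/-!
By uniqueness of extensions, a continuous linear map out of `L(X)` or `L_G(X)` is determined on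
the image of `X`; hence the extension `φ : L(X) → ℝ × L_G(X)` of `x ↦ (1, i_G x)` is inverted by
`(a, y) ↦ a • i e + h y`, where `h : L_G(X) → L(X)` extends `x ↦ i x - i e`.
The Mackey property is invariant under topological isomorphisms. A compatible locally convex
topology `t` on `E` gives the compatible topology `ℝ × (E, t)` on `ℝ × E`, and a compatible
topology on `ℝ × E` restricts along `inr` to a compatible topology on `E`.
-/

section Mackey

variable {E F : Type*} [AddCommGroup E] [Module ℝ E] [AddCommGroup F] [Module ℝ F]

theorem LinearMap.continuous_prod_iff {G : Type*} [AddCommGroup G] [Module ℝ G]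
    {tF : TopologicalSpace F} {tE : TopologicalSpace E} {tG : TopologicalSpace G}
    [@ContinuousAdd G tG _] (f : F × E →ₗ[ℝ] G) :
    Continuous[@instTopologicalSpaceProd F E tF tE, tG] f ↔
      Continuous[tF, tG] (f ∘ₗ LinearMap.inl ℝ F E) ∧
        Continuous[tE, tG] (f ∘ₗ LinearMap.inr ℝ F E) := by
  refine ⟨fun hf => ⟨hf.comp (continuous_id.prodMk continuous_const),
    hf.comp (continuous_const.prodMk continuous_id)⟩, fun ⟨hl, hr⟩ => ?_⟩
  rw [← f.coprod_comp_inl_inr]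
  exact (hl.comp continuous_fst).add (hr.comp continuous_snd)

theorem IsMackeySpace.of_continuousLinearEquiv [TopologicalSpace E] [TopologicalSpace F]
    (e : E ≃L[ℝ] F) (hE : IsMackeySpace E) : IsMackeySpace F := by
  -- facts about the given topologies come before `intro t`, whose instance then takes precedence
  let e' : E ≃ₗ[ℝ] F := e.toLinearEquiv
  have hpush : TopologicalSpace.coinduced e' ‹TopologicalSpace E› = ‹TopologicalSpace F› :=
    e.toHomeomorph.coinduced_eq
  have hcomp : ∀ g : E → ℝ, Continuous (g ∘ e'.symm) ↔ Continuous g := fun _ =>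
    e.symm.toHomeomorph.comp_continuous_iff'
  intro t ht₁ ht₂ ht₃ hdual
  have hpull : t.induced e' = t.coinduced e'.symm := congrFun e'.toEquiv.coinduced_symm.symm t
  have hle : _ ≤ t.induced e' :=
    hE _ (topologicalAddGroup_induced e'.toLinearMap) (continuousSMul_induced e'.toLinearMap)
      (LocallyConvexSpace.induced e'.toLinearMap) fun g => by
        rw [hpull, continuous_coinduced_dom, ← hcomp]
        exact hdual (g ∘ₗ e'.symm.toLinearMap)
  rw [← hpush]
  exact coinduced_le_iff_le_induced.2 hle

theorem ContinuousLinearEquiv.isMackeySpace_iff [TopologicalSpace E] [TopologicalSpace F]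
    (e : E ≃L[ℝ] F) : IsMackeySpace E ↔ IsMackeySpace F :=
  ⟨.of_continuousLinearEquiv e, .of_continuousLinearEquiv e.symm⟩

theorem IsMackeySpace.of_prod [TopologicalSpace F] [IsTopologicalAddGroup F]
    [ContinuousSMul ℝ F] [LocallyConvexSpace ℝ F] [τ : TopologicalSpace E] (h : IsMackeySpace (F × E)) :
    IsMackeySpace E := by
  have hinr : Continuous (LinearMap.inr ℝ F E) := continuous_const.prodMk continuous_id
  intro t ht₁ ht₂ ht₃ hdual
  let s : TopologicalSpace (F × E) := @instTopologicalSpaceProd F E _ t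
  have hle : _ ≤ s := h s inferInstance inferInstance inferInstance fun f => by
    rw [LinearMap.continuous_prod_iff, LinearMap.continuous_prod_iff, hdual]
  calc τ ≤ s.induced (LinearMap.inr ℝ F E) :=
        continuous_iff_le_induced.1 (continuous_le_rng hle hinr)
    _ ≤ (t.induced Prod.snd).induced (LinearMap.inr ℝ F E) := induced_mono inf_le_right
    _ = t := by rw [induced_compose]; exact induced_id

theorem IsMackeySpace.real_prod [τ : TopologicalSpace E]
    (hE : IsMackeySpace E) : IsMackeySpace (ℝ × E) := by
  have hfst : Continuous (LinearMap.fst ℝ ℝ E) := continuous_fst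
  intro s hs₁ hs₂ hs₃ hdual
  let t : TopologicalSpace E := s.induced (LinearMap.inr ℝ ℝ E)
  have hinr : Continuous[t, s] (LinearMap.inr ℝ ℝ E) := continuous_induced_dom
  -- `inr ∘ snd = id - fst • (1, 0)` is `s`-continuous since `fst` is a continuous functional
  have hsnd : Continuous[s, t] (Prod.snd : ℝ × E → E) := by
    rw [continuous_induced_rng]
    have hdecomp : LinearMap.inr ℝ ℝ E ∘ Prod.snd =
        fun p : ℝ × E => p - p.1 • ((1 : ℝ), (0 : E)) := by
      funext p; ext <;> simp
    rw [hdecomp]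
    exact continuous_id.sub (((hdual _).2 hfst).smul continuous_const)
  have hle : τ ≤ t := hE t (topologicalAddGroup_induced (LinearMap.inr ℝ ℝ E))
    (continuousSMul_induced (LinearMap.inr ℝ ℝ E)) (LocallyConvexSpace.induced _) fun g =>
    calc Continuous[t, _] g ↔ Continuous[s, _] (g ∘ₗ LinearMap.snd ℝ ℝ E) :=
          ⟨fun hg => hg.comp hsnd, fun hg => hg.comp hinr⟩
      _ ↔ _ := hdual _
      _ ↔ Continuous[τ, _] g := by
        rw [LinearMap.continuous_prod_iff, LinearMap.comp_assoc, LinearMap.comp_assoc,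
          LinearMap.snd_comp_inl, LinearMap.snd_comp_inr, LinearMap.comp_zero, LinearMap.comp_id]
        exact and_iff_right continuous_const
  refine continuous_id_iff_le.1 ?_
  rw [← LinearMap.id_coe (R := ℝ), LinearMap.continuous_prod_iff, LinearMap.id_comp,
    LinearMap.id_comp]
  exact ⟨LinearMap.continuous_of_finiteDimensional _, continuous_le_dom hle hinr⟩

theorem isMackeySpace_real_prod_iff [TopologicalSpace E] : IsMackeySpace (ℝ × E) ↔ IsMackeySpace E :=
  ⟨.of_prod, .real_prod⟩

end Mackey

theorem IsGraevFreeLCS.ext {X : Type v} [TopologicalSpace X] {e : X} {L : Type u}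
    [AddCommGroup L] [Module ℝ L] [TopologicalSpace L] {i : X → L}
    (hL : IsGraevFreeLCS X e L i) {E : Type u} [AddCommGroup E] [Module ℝ E]
    [TopologicalSpace E] [IsTopologicalAddGroup E] [ContinuousSMul ℝ E] [LocallyConvexSpace ℝ E]
    {g₁ g₂ : L →L[ℝ] E} (h : ∀ x, g₁ (i x) = g₂ (i x)) : g₁ = g₂ :=
  (hL.2.2 E (g₂ ∘ i) (g₂.continuous.comp hL.1) (by simp [hL.2.1])).unique h fun _ => rfl

namespace IsFreeLCS

variable {X : Type v} [TopologicalSpace X] {L : Type u} [AddCommGroup L] [Module ℝ L]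
  [TopologicalSpace L] {i : X → L}

theorem ext (hL : IsFreeLCS X L i) {E : Type u} [AddCommGroup E] [Module ℝ E]
    [TopologicalSpace E] [IsTopologicalAddGroup E] [ContinuousSMul ℝ E] [LocallyConvexSpace ℝ E]
    {g₁ g₂ : L →L[ℝ] E} (h : ∀ x, g₁ (i x) = g₂ (i x)) : g₁ = g₂ :=
  (hL.2 E (g₂ ∘ i) (g₂.continuous.comp hL.1)).unique h fun _ => rfl

theorem nonempty_continuousLinearEquiv_real_prod [IsTopologicalAddGroup L] [ContinuousSMul ℝ L]
    [LocallyConvexSpace ℝ L] (hL : IsFreeLCS X L i) {e : X} {LG : Type u} [AddCommGroup LG]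
    [Module ℝ LG] [TopologicalSpace LG] [IsTopologicalAddGroup LG] [ContinuousSMul ℝ LG]
    [LocallyConvexSpace ℝ LG] {iG : X → LG} (hLG : IsGraevFreeLCS X e LG iG) :
    Nonempty (L ≃L[ℝ] ℝ × LG) := by
  obtain ⟨φ, hφ, -⟩ := hL.2 (ℝ × LG) (fun x => (1, iG x)) (continuous_const.prodMk hLG.1)
  obtain ⟨h, hh, -⟩ := hLG.2.2 L (fun x => i x - i e) (hL.1.sub continuous_const) (sub_self _)
  let ψ : ℝ × LG →L[ℝ] L := (ContinuousLinearMap.smulRight (.id ℝ ℝ) (i e)).coprod h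
  have hψφ : ψ.comp φ = .id ℝ L := hL.ext fun x => by simp [ψ, hφ, hh]
  have hφψ : φ.comp ψ = .id ℝ (ℝ × LG) := by
    refine ContinuousLinearMap.prod_ext (ContinuousLinearMap.ext_ring ?_) (hLG.ext fun x => ?_)
    · simp [ψ, hφ, hLG.2.1]
    · simp [ψ, hφ, hh, hLG.2.1]
  exact ⟨.equivOfInverse' φ ψ hφψ hψφ⟩

end IsFreeLCS

theorem stmt19_general (X : Type v) [TopologicalSpace X]
    (L : Type u) [AddCommGroup L] [Module ℝ L] [TopologicalSpace L]
    [IsTopologicalAddGroup L] [ContinuousSMul ℝ L] [LocallyConvexSpace ℝ L]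
    (i : X → L) (hL : IsFreeLCS X L i)
    (e : X) (LG : Type u) [AddCommGroup LG] [Module ℝ LG] [TopologicalSpace LG]
    [IsTopologicalAddGroup LG] [ContinuousSMul ℝ LG] [LocallyConvexSpace ℝ LG]
    (iG : X → LG) (hLG : IsGraevFreeLCS X e LG iG) :
    Nonempty (L ≃L[ℝ] ℝ × LG) ∧ (IsMackeySpace L ↔ IsMackeySpace LG) := by
  obtain ⟨φ⟩ := hL.nonempty_continuousLinearEquiv_real_prod hLG
  exact ⟨⟨φ⟩, φ.isMackeySpace_iff.trans isMackeySpace_real_prod_iff⟩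

/-- for a Tychonoff space `X`, the free locally convex space `L(X)` is
topologically isomorphic to `ℝ ⊕ L_G(X)`; consequently `L(X)` is a Mackey space iff
`L_G(X)` is a Mackey space. -/
theorem stmt19 (X : Type v) [TopologicalSpace X] [T35Space X]
    (L : Type u) [AddCommGroup L] [Module ℝ L] [TopologicalSpace L]
    [IsTopologicalAddGroup L] [ContinuousSMul ℝ L] [LocallyConvexSpace ℝ L]
    (i : X → L) (hL : IsFreeLCS X L i)
    (e : X) (LG : Type u) [AddCommGroup LG] [Module ℝ LG] [TopologicalSpace LG]
    [IsTopologicalAddGroup LG] [ContinuousSMul ℝ LG] [LocallyConvexSpace ℝ LG]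
    (iG : X → LG) (hLG : IsGraevFreeLCS X e LG iG) :
    Nonempty (L ≃L[ℝ] ℝ × LG) ∧ (IsMackeySpace L ↔ IsMackeySpace LG) :=
  stmt19_general X L i hL e LG iG hLG
end
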